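/- Let σ₀ ∈ (1/2, 1) be fixed, and let a_L : {primes} → ℂ and κ > 0 be such that for every A > 0 one has ∑_{p ≤ x} |a_L(p)|² = κ·Li(x) + O_A(x/(log x)^A). Then as ρ → ∞, ∑_{e^{−1}ρ ≤ p ≤ eρ} |a_L(p)|²·w_p/p^{σ₀} = C_{σ₀}·κ·ρ^{1−σ₀}/log ρ + O(ρ^{1−σ₀}/(log ρ)²), where C_{σ₀} = (2·sinh((1−σ₀)/2)/(1−σ₀))². -/

import Mathlib

open Filter Real Set Asymptotics Finset

/-- The logarithmic integral `Li(x) = ∫_2^x dt / log t`. -/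
noncomputable def Li (x : ℝ) : ℝ := ∫ t in (2 : ℝ)..x, 1 / Real.log t

/-- The finite set of primes `p ≤ x`. -/
noncomputable def primesUpTo (x : ℝ) : Finset ℕ :=
  (Finset.Iic ⌊x⌋₊).filter Nat.Prime

open scoped Classical in
/-- The finite set of primes `p` with `e⁻¹ ρ ≤ p ≤ e ρ`. -/
noncomputable def primesNear (ρ : ℝ) : Finset ℕ :=
  (Finset.Iic ⌊Real.exp 1 * ρ⌋₊).filter
    (fun p => p.Prime ∧ Real.exp (-1) * ρ ≤ (p : ℝ) ∧ (p : ℝ) ≤ Real.exp 1 * ρ)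

open scoped Classical in
/-- The finite set of primes `p` with `a ρ ≤ p ≤ b ρ`. -/
noncomputable def primesIn (a b ρ : ℝ) : Finset ℕ :=
  (Finset.Iic ⌊b * ρ⌋₊).filter
    (fun p => p.Prime ∧ a * ρ ≤ (p : ℝ) ∧ (p : ℝ) ≤ b * ρ)

/-- The weight `w_p = 1 - |log (p/ρ)|`. -/
noncomputable def weight (ρ : ℝ) (p : ℕ) : ℝ := 1 - |Real.log ((p : ℝ) / ρ)|

/-- The constant `C_{σ₀} = (2 sinh((1-σ₀)/2) / (1-σ₀))²`. -/
noncomputable def Csigma (σ₀ : ℝ) : ℝ := (2 * Real.sinh ((1 - σ₀) / 2) / (1 - σ₀)) ^ 2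

/-- The strong Selberg orthonormality condition for a family of coefficient
sequences `a_1, …, a_k` with constants `κ_1, …, κ_k`. -/
def SSOC {k : ℕ} (a : Fin k → ℕ → ℂ) (κ : Fin k → ℝ) : Prop :=
  ∀ i j : Fin k, ∀ A : ℝ, 0 < A →
    (fun x : ℝ => (∑ p ∈ primesUpTo x, a i p * (starRingEnd ℂ) (a j p)) -
      (if i = j then (κ j : ℂ) * (Li x : ℂ) else 0)) =O[atTop]
    (fun x : ℝ => x / (Real.log x) ^ A)

/-!
Write `c_p = |a_L(p)|²` and `E(x) = ∑_{p ≤ x} c_p - κ Li(x) = O(x / log² x)`. On `[ρ/e, ρ]` and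
on `[ρ, eρ]` the summand `w_p p^{-σ}` is a smooth function `φ(p)` of size `ρ^{-σ}`, with
derivative of size `ρ^{-σ-1}`. Abel summation, followed by an integration by parts against `Li`,
gives `∑ c_p φ(p) = κ ∫ φ(t) / log t dt + φ E |_a^b - ∫ φ' E`, and the last two terms are
`O(ρ^{1-σ} / log² ρ)`. Replacing `1 / log t` by `1 / log ρ` costs as much, and
`∫_{ρ/e}^{eρ} (1 - |log (t/ρ)|) t^{-σ} dt = C_σ ρ^{1-σ}` exactly.
-/

open intervalIntegral MeasureTheory

lemma continuousOn_one_div_log : ContinuousOn (fun t : ℝ => 1 / log t) (Ioi 1) :=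
  continuousOn_const.div (continuousOn_log.mono fun _ ht => (zero_lt_one.trans ht).ne')
    fun _ ht => (log_pos ht).ne'

lemma hasDerivAt_Li {x : ℝ} (hx : 1 < x) : HasDerivAt Li (1 / log x) x := by
  refine integral_hasDerivAt_right ?_
    (measurable_const.div measurable_log).stronglyMeasurable.stronglyMeasurableAtFilter
    (continuousOn_one_div_log.continuousAt (Ioi_mem_nhds hx))
  exact (continuousOn_one_div_log.mono fun t ht => (lt_min one_lt_two hx).trans_le ht.1)
    |>.intervalIntegrable

noncomputable def liRemainder (c : ℕ → ℝ) (κ x : ℝ) : ℝ := ∑ k ∈ Icc 0 ⌊x⌋₊, c k - κ * Li x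

section Abel

variable {c : ℕ → ℝ} {κ a b : ℝ} {f f' : ℝ → ℝ}

theorem sum_Ioc_mul_eq_integral_div_log_add (ha : 1 < a) (hab : a ≤ b)
    (hf : ∀ t ∈ Icc a b, HasDerivAt f (f' t) t) (hf' : ContinuousOn f' (Icc a b)) :
    ∑ k ∈ Ioc ⌊a⌋₊ ⌊b⌋₊, f k * c k = κ * (∫ t in a..b, f t / log t) +
      (f b * liRemainder c κ b - f a * liRemainder c κ a -
        ∫ t in a..b, f' t * liRemainder c κ t) := by
  have hderiv : EqOn (deriv f) f' (Icc a b) := fun t ht => (hf t ht).deriv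
  have hLi : ContinuousOn Li (Icc a b) := fun t ht =>
    (hasDerivAt_Li (ha.trans_le ht.1)).continuousAt.continuousWithinAt
  have hf'Li : IntegrableOn (fun t => f' t * Li t) (Ioc a b) :=
    (hf'.mul hLi).integrableOn_Icc.mono_set Ioc_subset_Icc_self
  have hf'N : IntegrableOn (fun t => f' t * ∑ k ∈ Icc 0 ⌊t⌋₊, c k) (Ioc a b) :=
    (integrableOn_mul_sum_Icc c (by linarith) hf'.integrableOn_Icc).mono_set Ioc_subset_Icc_self
  have habel := sum_mul_eq_sub_sub_integral_mul c (by linarith) hab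
    (fun t ht => (hf t ht).differentiableAt)
    (hf'.integrableOn_Icc.congr_fun hderiv.symm measurableSet_Icc)
  have hparts : ∫ t in a..b, f t * (1 / log t) =
      f b * Li b - f a * Li a - ∫ t in a..b, f' t * Li t := by
    rw [← uIcc_of_le hab] at hf
    refine integral_mul_deriv_eq_deriv_mul hf (fun t ht => ?_)
      (hf'.intervalIntegrable_of_Icc hab)
      ((continuousOn_one_div_log.mono fun t ht => ha.trans_le ht.1).intervalIntegrable_of_Icc hab)
    exact hasDerivAt_Li (ha.trans_le (uIcc_of_le hab ▸ ht).1)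
  have hderivN : ∫ t in Ioc a b, deriv f t * ∑ k ∈ Icc 0 ⌊t⌋₊, c k =
      ∫ t in Ioc a b, f' t * ∑ k ∈ Icc 0 ⌊t⌋₊, c k :=
    setIntegral_congr_fun measurableSet_Ioc fun t ht => by rw [hderiv ⟨ht.1.le, ht.2⟩]
  have hremainder : ∫ t in a..b, f' t * liRemainder c κ t =
      (∫ t in Ioc a b, f' t * ∑ k ∈ Icc 0 ⌊t⌋₊, c k) - κ * ∫ t in a..b, f' t * Li t := by
    rw [integral_of_le hab, integral_of_le hab, ← MeasureTheory.integral_const_mul,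
      ← integral_sub hf'N (hf'Li.const_mul κ)]
    exact setIntegral_congr_fun measurableSet_Ioc fun t _ => by rw [liRemainder]; ring
  simp only [mul_one_div] at hparts
  rw [habel, hderivN, hremainder, hparts, liRemainder, liRemainder]
  ring

end Abel

section LocalEstimate

variable {a b L M : ℝ} {f : ℝ → ℝ}

lemma abs_one_div_sub_one_div_le {u L : ℝ} (hL : 2 ≤ L) (hu : |u - L| ≤ 1) :
    |1 / u - 1 / L| ≤ 2 / L ^ 2 := by
  obtain ⟨hu₁, hu₂⟩ := abs_le.mp hu
  have hL₀ : 0 < L := by linarith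
  have hu₀ : 0 < u := by linarith
  have hdiff : |1 * L - u * 1| ≤ 1 := abs_le.mpr ⟨by linarith, by linarith⟩
  rw [div_sub_div _ _ hu₀.ne' hL₀.ne', abs_div, abs_of_pos (mul_pos hu₀ hL₀),
    div_le_div_iff₀ (mul_pos hu₀ hL₀) (by positivity)]
  nlinarith [mul_le_mul_of_nonneg_right hdiff (sq_nonneg L)]

theorem abs_integral_div_log_sub_le (hab : a ≤ b) (hL : 2 ≤ L)
    (hlog : ∀ t ∈ Icc a b, |log t - L| ≤ 1) (hf : ContinuousOn f (Icc a b))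
    (hfM : ∀ t ∈ Icc a b, |f t| ≤ M) :
    |(∫ t in a..b, f t / log t) - (∫ t in a..b, f t) / L| ≤ M * (2 / L ^ 2) * (b - a) := by
  have hlog_pos : ∀ t ∈ Icc a b, 0 < log t := fun t ht => by
    linarith [(abs_le.mp (hlog t ht)).1]
  have hf_div : IntervalIntegrable (fun t => f t / log t) volume a b :=
    (hf.div (continuousOn_log.mono fun t ht h₀ =>
        (hlog_pos t ht).ne' (by rw [mem_singleton_iff.1 h₀, log_zero]))
      fun t ht => (hlog_pos t ht).ne').intervalIntegrable_of_Icc hab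
  rw [← intervalIntegral.integral_div, ← integral_sub hf_div
    ((hf.div_const L).intervalIntegrable_of_Icc hab), ← Real.norm_eq_abs,
    ← abs_of_nonneg (sub_nonneg.2 hab)]
  refine intervalIntegral.norm_integral_le_of_norm_le_const fun t ht => ?_
  rw [uIoc_of_le hab] at ht
  have ht' : t ∈ Icc a b := Ioc_subset_Icc_self ht
  rw [Real.norm_eq_abs, div_eq_mul_one_div (f t), div_eq_mul_one_div (f t), ← mul_sub, abs_mul]
  exact mul_le_mul (hfM t ht') (abs_one_div_sub_one_div_le hL (hlog t ht')) (abs_nonneg _)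
    ((abs_nonneg _).trans (hfM t ht'))

theorem abs_sum_Ioc_mul_sub_le {c : ℕ → ℝ} {κ M' B : ℝ} {f' : ℝ → ℝ} (hκ : 0 ≤ κ)
    (ha : 1 < a) (hab : a ≤ b) (hL : 2 ≤ L) (hlog : ∀ t ∈ Icc a b, |log t - L| ≤ 1)
    (hf : ∀ t ∈ Icc a b, HasDerivAt f (f' t) t) (hf' : ContinuousOn f' (Icc a b))
    (hfM : ∀ t ∈ Icc a b, |f t| ≤ M) (hf'M : ∀ t ∈ Icc a b, |f' t| ≤ M')
    (hEB : ∀ t ∈ Icc a b, |liRemainder c κ t| ≤ B) :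
    |∑ k ∈ Ioc ⌊a⌋₊ ⌊b⌋₊, f k * c k - κ * (∫ t in a..b, f t) / L|
      ≤ κ * (M * (2 / L ^ 2) * (b - a)) + (2 * M + M' * (b - a)) * B := by
  set E := liRemainder c κ
  have ha' : a ∈ Icc a b := left_mem_Icc.2 hab
  have hb' : b ∈ Icc a b := right_mem_Icc.2 hab
  have hmain := abs_integral_div_log_sub_le hab hL hlog
    (fun t ht => (hf t ht).continuousAt.continuousWithinAt) hfM
  have hendpoint : ∀ t ∈ Icc a b, |f t * E t| ≤ M * B := fun t ht => by
    rw [abs_mul]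
    exact mul_le_mul (hfM t ht) (hEB t ht) (abs_nonneg _) ((abs_nonneg _).trans (hfM t ht))
  have hintegral : |∫ t in a..b, f' t * E t| ≤ M' * B * (b - a) := by
    rw [← Real.norm_eq_abs, ← abs_of_nonneg (sub_nonneg.2 hab)]
    refine intervalIntegral.norm_integral_le_of_norm_le_const fun t ht => ?_
    have ht' : t ∈ Icc a b := Ioc_subset_Icc_self (uIoc_of_le hab ▸ ht)
    rw [Real.norm_eq_abs, abs_mul]
    exact mul_le_mul (hf'M t ht') (hEB t ht') (abs_nonneg _)
      ((abs_nonneg _).trans (hf'M t ht'))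
  rw [sum_Ioc_mul_eq_integral_div_log_add ha hab hf hf']
  calc |κ * (∫ t in a..b, f t / log t) + (f b * E b - f a * E a - ∫ t in a..b, f' t * E t)
        - κ * (∫ t in a..b, f t) / L|
      = |κ * ((∫ t in a..b, f t / log t) - (∫ t in a..b, f t) / L)
          + (f b * E b - f a * E a - ∫ t in a..b, f' t * E t)| := by ring_nf
    _ ≤ κ * |(∫ t in a..b, f t / log t) - (∫ t in a..b, f t) / L|
          + (|f b * E b| + |f a * E a| + |∫ t in a..b, f' t * E t|) := by
        refine (abs_add_le _ _).trans (add_le_add (by rw [abs_mul, abs_of_nonneg hκ]) ?_)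
        exact (abs_sub _ _).trans (add_le_add_left (abs_sub _ _) _)
    _ ≤ κ * (M * (2 / L ^ 2) * (b - a)) + (M * B + M * B + M' * B * (b - a)) := by
        gcongr
        exacts [hendpoint b hb', hendpoint a ha']
    _ = κ * (M * (2 / L ^ 2) * (b - a)) + (2 * M + M' * (b - a)) * B := by ring

end LocalEstimate

/-- On `[ρ/e, ρ]` (with `ε = 1`) and on `[ρ, eρ]` (with `ε = -1`) the summand
`w_p / p^σ` is the smooth function `(1 + ε log (t/ρ)) t^{-σ}`. -/
noncomputable def weightPiece (σ ε ρ t : ℝ) : ℝ := (1 + ε * (log t - log ρ)) * t ^ (-σ)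

noncomputable def weightPieceDeriv (σ ε ρ t : ℝ) : ℝ :=
  (ε - σ * (1 + ε * (log t - log ρ))) * t ^ (-σ - 1)

noncomputable def weightPieceAntideriv (σ ε ρ t : ℝ) : ℝ :=
  t ^ (1 - σ) / (1 - σ) * (1 + ε * (log t - log ρ) - ε / (1 - σ))

section WeightPiece

variable {σ ε ρ t : ℝ}

lemma hasDerivAt_weightPiece (ht : 0 < t) :
    HasDerivAt (weightPiece σ ε ρ) (weightPieceDeriv σ ε ρ t) t := by
  have hlog : HasDerivAt (fun t => 1 + ε * (log t - log ρ)) (ε * t⁻¹) t :=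
    (((hasDerivAt_log ht.ne').sub_const (log ρ)).const_mul ε).const_add 1
  refine (hlog.mul (hasDerivAt_rpow_const (p := -σ) (Or.inl ht.ne'))).congr_deriv ?_
  rw [weightPieceDeriv, rpow_sub_one ht.ne']
  field_simp
  ring

lemma hasDerivAt_weightPieceAntideriv (hσ : σ ≠ 1) (ht : 0 < t) :
    HasDerivAt (weightPieceAntideriv σ ε ρ) (weightPiece σ ε ρ t) t := by
  have hσ' : 1 - σ ≠ 0 := sub_ne_zero.2 hσ.symm
  have hpow : HasDerivAt (fun t => t ^ (1 - σ) / (1 - σ))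
      ((1 - σ) * t ^ (1 - σ - 1) / (1 - σ)) t :=
    (hasDerivAt_rpow_const (Or.inl ht.ne')).div_const _
  have hlog : HasDerivAt (fun t => 1 + ε * (log t - log ρ) - ε / (1 - σ)) (ε * t⁻¹) t :=
    ((((hasDerivAt_log ht.ne').sub_const (log ρ)).const_mul ε).const_add 1).sub_const _
  refine (hpow.mul hlog).congr_deriv ?_
  have hpow' : t ^ (1 - σ) = t ^ (-σ) * t := by rw [← rpow_add_one ht.ne']; ring_nf
  rw [weightPiece, sub_sub_cancel_left, hpow']
  field_simp
  ring

lemma continuousOn_weightPieceDeriv {s : Set ℝ} (hs : s ⊆ Ioi 0) :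
    ContinuousOn (weightPieceDeriv σ ε ρ) s := by
  have hlog : ContinuousOn log s := continuousOn_log.mono fun t ht => (hs ht).ne'
  refine ContinuousOn.mul ?_ fun t ht =>
    (continuousAt_rpow_const _ _ (Or.inl (hs ht).ne')).continuousWithinAt
  exact continuousOn_const.sub (continuousOn_const.mul (continuousOn_const.add
    (continuousOn_const.mul (hlog.sub continuousOn_const))))

end WeightPiece

section Window

variable {σ ε ρ t : ℝ}

lemma log_exp_mul (x : ℝ) (hρ : 0 < ρ) : log (exp x * ρ) = x + log ρ := by
  rw [log_mul (exp_pos x).ne' hρ.ne', log_exp]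

lemma rpow_exp_mul (x s : ℝ) (hρ : 0 < ρ) : (exp x * ρ) ^ s = exp (x * s) * ρ ^ s := by
  rw [mul_rpow (exp_pos x).le hρ.le, exp_mul]

lemma exp_neg_one_mul_le (hρ : 0 ≤ ρ) : exp (-1) * ρ ≤ ρ :=
  mul_le_of_le_one_left hρ (exp_le_one_iff.2 (by norm_num))

lemma le_exp_one_mul (hρ : 0 ≤ ρ) : ρ ≤ exp 1 * ρ :=
  le_mul_of_one_le_left hρ (one_le_exp_iff.2 zero_le_one)

lemma abs_log_sub_log_le_one (hρ : 0 < ρ) (ht : t ∈ Icc (exp (-1) * ρ) (exp 1 * ρ)) :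
    |log t - log ρ| ≤ 1 := by
  have ht₀ : 0 < t := (mul_pos (exp_pos _) hρ).trans_le ht.1
  have h₁ := log_le_log (mul_pos (exp_pos _) hρ) ht.1
  have h₂ := log_le_log ht₀ ht.2
  rw [log_exp_mul _ hρ] at h₁ h₂
  exact abs_le.2 ⟨by linarith, by linarith⟩

lemma rpow_neg_le_exp_mul_rpow_neg {s : ℝ} (hρ : 0 < ρ) (hs : 0 ≤ s)
    (ht : exp (-1) * ρ ≤ t) : t ^ (-s) ≤ exp s * ρ ^ (-s) := by
  calc t ^ (-s) ≤ (exp (-1) * ρ) ^ (-s) :=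
        rpow_le_rpow_of_nonpos (mul_pos (exp_pos _) hρ) ht (neg_nonpos.2 hs)
    _ = exp s * ρ ^ (-s) := by rw [rpow_exp_mul _ _ hρ]; ring_nf

lemma abs_one_add_mul_le_two {x : ℝ} (hε : |ε| ≤ 1) (hx : |x| ≤ 1) : |1 + ε * x| ≤ 2 := by
  calc |1 + ε * x| ≤ |1| + |ε| * |x| := (abs_add_le _ _).trans_eq (by rw [abs_mul])
    _ ≤ 2 := by rw [abs_one]; nlinarith [abs_nonneg ε, abs_nonneg x]

lemma abs_weightPiece_le (hσ : 0 ≤ σ) (hε : |ε| ≤ 1) (hρ : 0 < ρ)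
    (ht : t ∈ Icc (exp (-1) * ρ) (exp 1 * ρ)) :
    |weightPiece σ ε ρ t| ≤ 2 * exp σ * ρ ^ (-σ) := by
  have ht₀ : 0 < t := (mul_pos (exp_pos _) hρ).trans_le ht.1
  rw [weightPiece, abs_mul, abs_of_pos (rpow_pos_of_pos ht₀ _), mul_assoc]
  exact mul_le_mul (abs_one_add_mul_le_two hε (abs_log_sub_log_le_one hρ ht))
    (rpow_neg_le_exp_mul_rpow_neg hρ hσ ht.1) (rpow_pos_of_pos ht₀ _).le zero_le_two

lemma abs_weightPieceDeriv_le (hσ : 0 ≤ σ) (hε : |ε| ≤ 1) (hρ : 0 < ρ)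
    (ht : t ∈ Icc (exp (-1) * ρ) (exp 1 * ρ)) :
    |weightPieceDeriv σ ε ρ t| ≤ (1 + 2 * σ) * exp (σ + 1) * ρ ^ (-σ - 1) := by
  have ht₀ : 0 < t := (mul_pos (exp_pos _) hρ).trans_le ht.1
  have hfactor : |ε - σ * (1 + ε * (log t - log ρ))| ≤ 1 + 2 * σ := by
    have h := abs_one_add_mul_le_two hε (abs_log_sub_log_le_one hρ ht)
    calc _ ≤ |ε| + |σ * (1 + ε * (log t - log ρ))| := abs_sub _ _
      _ ≤ 1 + 2 * σ := by rw [abs_mul, abs_of_nonneg hσ]; nlinarith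
  rw [weightPieceDeriv, abs_mul, abs_of_pos (rpow_pos_of_pos ht₀ _), mul_assoc,
    sub_eq_add_neg, ← neg_add']
  exact mul_le_mul hfactor (rpow_neg_le_exp_mul_rpow_neg hρ (by linarith) ht.1)
    (rpow_pos_of_pos ht₀ _).le (by linarith)

end Window

section WeightPieceIntegral

variable {σ ε ρ : ℝ}

lemma integral_weightPiece (hσ : σ ≠ 1) {a b : ℝ} (ha : 0 < a) (hab : a ≤ b) :
    ∫ t in a..b, weightPiece σ ε ρ t =
      weightPieceAntideriv σ ε ρ b - weightPieceAntideriv σ ε ρ a := by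
  have hpos : ∀ t ∈ uIcc a b, 0 < t := fun t ht => ha.trans_le (uIcc_of_le hab ▸ ht).1
  exact integral_eq_sub_of_hasDerivAt
    (fun t ht => hasDerivAt_weightPieceAntideriv hσ (hpos t ht))
    (ContinuousOn.intervalIntegrable fun t ht =>
      (hasDerivAt_weightPiece (hpos t ht)).continuousAt.continuousWithinAt)

lemma two_mul_sinh_half_sq (x : ℝ) : (2 * sinh (x / 2)) ^ 2 = exp x + exp (-x) - 2 := by
  have h₁ : exp x = exp (x / 2) ^ 2 := by rw [← exp_nat_mul]; ring_nf
  have h₂ : exp (-x) = exp (-(x / 2)) ^ 2 := by rw [← exp_nat_mul]; ring_nf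
  have h₃ : exp (x / 2) * exp (-(x / 2)) = 1 := by rw [← exp_add, add_neg_cancel, exp_zero]
  rw [sinh_eq, h₁, h₂]
  linear_combination -2 * h₃

theorem integral_weightPiece_add (hσ : σ ≠ 1) (hρ : 0 < ρ) :
    (∫ t in exp (-1) * ρ..ρ, weightPiece σ 1 ρ t) +
      ∫ t in ρ..exp 1 * ρ, weightPiece σ (-1) ρ t = Csigma σ * ρ ^ (1 - σ) := by
  have hσ' : 1 - σ ≠ 0 := sub_ne_zero.2 hσ.symm
  rw [integral_weightPiece hσ (mul_pos (exp_pos _) hρ) (exp_neg_one_mul_le hρ.le),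
    integral_weightPiece hσ hρ (le_exp_one_mul hρ.le)]
  simp only [weightPieceAntideriv, Csigma, log_exp_mul _ hρ, rpow_exp_mul _ _ hρ, div_pow,
    two_mul_sinh_half_sq]
  field_simp
  ring

end WeightPieceIntegral

lemma eventually_abs_liRemainder_le {c : ℕ → ℝ} {κ : ℝ}
    (hE : liRemainder c κ =O[atTop] fun x => x / log x ^ 2) :
    ∃ K, 0 < K ∧ ∀ᶠ ρ in atTop, ∀ t ∈ Icc (exp (-1) * ρ) (exp 1 * ρ),
      |liRemainder c κ t| ≤ K * (ρ / log ρ ^ 2) := by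
  obtain ⟨K, hK, hKE⟩ := hE.exists_pos
  obtain ⟨x₀, hx₀⟩ := eventually_atTop.1 hKE.bound
  refine ⟨K * (4 * exp 1), by positivity, ?_⟩
  filter_upwards [eventually_ge_atTop (exp 2),
    (tendsto_id.const_mul_atTop (exp_pos (-1))).eventually_ge_atTop x₀] with ρ hρ hρx₀ t ht
  have hρ₀ : 0 < ρ := (exp_pos 2).trans_le hρ
  have hL : 2 ≤ log ρ := (le_log_iff_exp_le hρ₀).2 hρ
  have ht₀ : 0 < t := (mul_pos (exp_pos _) hρ₀).trans_le ht.1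
  have hlog_t : log ρ / 2 ≤ log t := by
    linarith [(abs_le.1 (abs_log_sub_log_le_one hρ₀ ht)).1]
  have hbound := hx₀ t (hρx₀.trans ht.1)
  rw [Real.norm_eq_abs, Real.norm_of_nonneg (by positivity)] at hbound
  refine hbound.trans ?_
  rw [mul_assoc]
  gcongr K * ?_
  calc t / log t ^ 2 ≤ exp 1 * ρ / (log ρ / 2) ^ 2 := by
        gcongr
        exact ht.2
    _ = 4 * exp 1 * (ρ / log ρ ^ 2) := by ring

theorem isBigO_sum_weightPiece_sub {c : ℕ → ℝ} {σ ε κ α β : ℝ} (hσ : 0 ≤ σ) (hε : |ε| ≤ 1)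
    (hκ : 0 ≤ κ) (hα : exp (-1) ≤ α) (hαβ : α ≤ β) (hβ : β ≤ exp 1)
    (hE : liRemainder c κ =O[atTop] fun x => x / log x ^ 2) :
    (fun ρ => ∑ k ∈ Ioc ⌊α * ρ⌋₊ ⌊β * ρ⌋₊, weightPiece σ ε ρ k * c k
        - κ * (∫ t in α * ρ..β * ρ, weightPiece σ ε ρ t) / log ρ)
      =O[atTop] fun ρ => ρ ^ (1 - σ) / log ρ ^ 2 := by
  obtain ⟨K, hK, hEK⟩ := eventually_abs_liRemainder_le hE
  refine IsBigO.of_bound (4 * κ * exp σ * exp 1 +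
    (4 * exp σ + (1 + 2 * σ) * exp (σ + 1) * exp 1) * K) ?_
  filter_upwards [hEK, eventually_ge_atTop (exp 2)] with ρ hρE hρ
  have hρ₀ : 0 < ρ := (exp_pos 2).trans_le hρ
  have hL : 2 ≤ log ρ := (le_log_iff_exp_le hρ₀).2 hρ
  have hwindow : Icc (α * ρ) (β * ρ) ⊆ Icc (exp (-1) * ρ) (exp 1 * ρ) :=
    Icc_subset_Icc (by gcongr) (by gcongr)
  have hpos : Icc (α * ρ) (β * ρ) ⊆ Ioi 0 := fun t ht =>
    (mul_pos (exp_pos _) hρ₀).trans_le (hwindow ht).1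
  have ha : 1 < α * ρ := calc
    1 < exp (-1) * exp 2 := by rw [← exp_add]; exact one_lt_exp_iff.2 (by norm_num)
    _ ≤ α * ρ := mul_le_mul hα hρ (exp_pos _).le ((exp_pos _).le.trans hα)
  have hlen : β * ρ - α * ρ ≤ exp 1 * ρ := by nlinarith [exp_pos (-1)]
  have hpow₁ : ρ ^ (-σ) = ρ ^ (1 - σ) / ρ := by
    rw [rpow_sub hρ₀, rpow_one, rpow_neg hρ₀.le]
    field_simp
  have hpow₂ : ρ ^ (-σ - 1) = ρ ^ (1 - σ) / ρ ^ 2 := by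
    rw [rpow_sub_one hρ₀.ne', hpow₁, div_div, ← sq]
  rw [Real.norm_eq_abs, Real.norm_of_nonneg (by positivity)]
  refine (abs_sum_Ioc_mul_sub_le hκ ha (by gcongr) hL
    (fun t ht => abs_log_sub_log_le_one hρ₀ (hwindow ht))
    (fun t ht => hasDerivAt_weightPiece (hpos ht)) (continuousOn_weightPieceDeriv hpos)
    (fun t ht => abs_weightPiece_le hσ hε hρ₀ (hwindow ht))
    (fun t ht => abs_weightPieceDeriv_le hσ hε hρ₀ (hwindow ht))
    (fun t ht => hρE t (hwindow ht))).trans ?_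
  calc _ ≤ κ * (2 * exp σ * ρ ^ (-σ) * (2 / log ρ ^ 2) * (exp 1 * ρ)) +
        (2 * (2 * exp σ * ρ ^ (-σ)) +
          (1 + 2 * σ) * exp (σ + 1) * ρ ^ (-σ - 1) * (exp 1 * ρ)) * (K * (ρ / log ρ ^ 2)) := by
        gcongr
    _ = _ := by rw [hpow₁, hpow₂]; field_simp; ring

noncomputable def sqNormOnPrimes (aL : ℕ → ℂ) (k : ℕ) : ℝ :=
  if k.Prime then ‖aL k‖ ^ 2 else 0

lemma sum_primesUpTo_eq_sum_Icc (aL : ℕ → ℂ) (x : ℝ) :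
    ∑ p ∈ primesUpTo x, ‖aL p‖ ^ 2 = ∑ k ∈ Icc 0 ⌊x⌋₊, sqNormOnPrimes aL k := by
  rw [primesUpTo, sum_filter]
  rfl

section SumSplit

variable {σ ρ : ℝ} {k : ℕ}

lemma weight_div_rpow_of_le (hk : 0 < (k : ℝ)) (hkρ : (k : ℝ) ≤ ρ) :
    weight ρ k / (k : ℝ) ^ σ = weightPiece σ 1 ρ k := by
  rw [weight, weightPiece, log_div hk.ne' (hk.trans_le hkρ).ne',
    abs_of_nonpos (sub_nonpos.2 (log_le_log hk hkρ)), rpow_neg hk.le]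
  ring

lemma weight_div_rpow_of_ge (hρ : 0 < ρ) (hkρ : ρ ≤ (k : ℝ)) :
    weight ρ k / (k : ℝ) ^ σ = weightPiece σ (-1) ρ k := by
  have hk : 0 < (k : ℝ) := hρ.trans_le hkρ
  rw [weight, weightPiece, log_div hk.ne' hρ.ne',
    abs_of_nonneg (sub_nonneg.2 (log_le_log hρ hkρ)), rpow_neg hk.le]
  ring

/-- The prime `p = ρ/e` (if any) has weight `0`, which turns the closed range `[ρ/e, eρ]` of
`primesNear` into the half-open one of Abel summation. -/
lemma sum_primesNear_eq_sum_Ioc (aL : ℕ → ℂ) (hρ : 0 < ρ) :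
    ∑ p ∈ primesNear ρ, ‖aL p‖ ^ 2 * weight ρ p / (p : ℝ) ^ σ =
      ∑ k ∈ (Finset.Ioc ⌊exp (-1) * ρ⌋₊ ⌊exp 1 * ρ⌋₊).filter Nat.Prime,
        ‖aL k‖ ^ 2 * weight ρ k / (k : ℝ) ^ σ := by
  have ha : 0 ≤ exp (-1) * ρ := by positivity
  symm
  refine sum_subset (fun p hp => ?_) fun p hp hp' => ?_
  · simp only [Finset.mem_filter, Finset.mem_Ioc, Nat.floor_lt ha] at hp
    simp only [primesNear, Finset.mem_filter, Finset.mem_Iic]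
    exact ⟨hp.1.2, hp.2, hp.1.1.le, (Nat.le_floor_iff (by positivity)).1 hp.1.2⟩
  · simp only [primesNear, Finset.mem_filter, Finset.mem_Iic] at hp
    simp only [Finset.mem_filter, Finset.mem_Ioc, Nat.floor_lt ha, hp.1, hp.2.1,
      and_true] at hp'
    have hpa : (p : ℝ) = exp (-1) * ρ := le_antisymm (not_lt.1 hp') hp.2.2.1
    rw [weight, hpa, mul_div_cancel_right₀ _ hρ.ne', log_exp]
    norm_num

theorem sum_primesNear_eq (aL : ℕ → ℂ) (hρ : 0 < ρ) :
    ∑ p ∈ primesNear ρ, ‖aL p‖ ^ 2 * weight ρ p / (p : ℝ) ^ σ =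
      ∑ k ∈ Ioc ⌊exp (-1) * ρ⌋₊ ⌊ρ⌋₊, weightPiece σ 1 ρ k * sqNormOnPrimes aL k +
        ∑ k ∈ Ioc ⌊ρ⌋₊ ⌊exp 1 * ρ⌋₊, weightPiece σ (-1) ρ k * sqNormOnPrimes aL k := by
  have ha : 0 ≤ exp (-1) * ρ := by positivity
  rw [sum_primesNear_eq_sum_Ioc aL hρ, sum_filter, ← sum_Ioc_consecutive _
    (Nat.floor_le_floor (exp_neg_one_mul_le hρ.le)) (Nat.floor_le_floor (le_exp_one_mul hρ.le))]
  congr 1 <;> refine sum_congr rfl fun k hk => ?_ <;> rw [sqNormOnPrimes, mul_div_assoc]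
  · rw [Finset.mem_Ioc, Nat.floor_lt ha, Nat.le_floor_iff hρ.le] at hk
    rw [weight_div_rpow_of_le (ha.trans_lt hk.1) hk.2]
    split_ifs <;> ring
  · rw [Finset.mem_Ioc, Nat.floor_lt hρ.le] at hk
    rw [weight_div_rpow_of_ge hρ hk.1.le]
    split_ifs <;> ring

end SumSplit

/-- Asymptotics for the weighted sum `∑_{e⁻¹ρ ≤ p ≤ eρ} |a_L(p)|² w_p / p^{σ₀}`. -/
theorem sum_sq_weighted (σ₀ : ℝ) (hσ : σ₀ ∈ Set.Ioo (1/2 : ℝ) 1)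
    (aL : ℕ → ℂ) (κ : ℝ) (hκ : 0 < κ)
    (h : ∀ A : ℝ, 0 < A →
      (fun x : ℝ => (∑ p ∈ primesUpTo x, ‖aL p‖ ^ 2) - κ * Li x) =O[atTop]
        (fun x : ℝ => x / (Real.log x) ^ A)) :
    (fun ρ : ℝ => (∑ p ∈ primesNear ρ, ‖aL p‖ ^ 2 * weight ρ p / (p : ℝ) ^ σ₀) -
        Csigma σ₀ * κ * ρ ^ (1 - σ₀) / Real.log ρ)
      =O[atTop] (fun ρ : ℝ => ρ ^ (1 - σ₀) / (Real.log ρ) ^ 2) := by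
  have hσ₀ : 0 ≤ σ₀ := by linarith [hσ.1]
  have hE : liRemainder (sqNormOnPrimes aL) κ =O[atTop] fun x => x / log x ^ 2 := by
    refine (h 2 two_pos).congr (fun x => ?_) fun x => ?_
    · rw [liRemainder, sum_primesUpTo_eq_sum_Icc]
    · rw [rpow_two]
  have he₁ : exp (-1) ≤ 1 := exp_le_one_iff.2 (by norm_num)
  have he₂ : 1 ≤ exp 1 := one_le_exp_iff.2 zero_le_one
  have hleft := isBigO_sum_weightPiece_sub (ε := 1) hσ₀ (by norm_num) hκ.le le_rfl he₁ he₂ hE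
  have hright := isBigO_sum_weightPiece_sub (ε := -1) hσ₀ (by norm_num) hκ.le he₁ he₂ le_rfl hE
  simp only [one_mul] at hleft hright
  refine (hleft.add hright).congr' ?_ EventuallyEq.rfl
  filter_upwards [eventually_gt_atTop 0] with ρ hρ
  rw [sum_primesNear_eq aL hρ]
  linear_combination (-κ / log ρ) * integral_weightPiece_add hσ.2.ne hρ
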